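/- arXiv:1109.2661 — 5 statements merged into one kernel-verified Lean document; each statement's English description precedes it below -/
import Mathlib

section
/- The total number of peaks in all Dyck paths of order n (for n ≥ 1) equals C(2n-1, n), i.e., ∑_{k=1}^{n} k · N(n,k) = C(2n-1, n), where N(n,k) = (1/n)·C(n,k)·C(n,k-1) is the Narayana number. -/
/-- A peak at position `i`: an up-step (`true`) immediately followed by a down-step. -/
def IsPeakAt (w : List Bool) (i : ℕ) : Prop :=
  w[i]? = some true ∧ w[i + 1]? = some false

/-- A Dyck word: equally many up- and down-steps, every prefix has at least as
many up-steps as down-steps. -/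
def IsDyck (w : List Bool) : Prop :=
  w.count true = w.count false ∧ ∀ p, p <+: w → p.count false ≤ p.count true

/-!
Deleting the peak `UD` at position `i` of a Dyck path of semilength `m + 1` leaves a Dyck path of
semilength `m`, and conversely inserting `UD` at any of the `2m + 1` positions of a Dyck path of
semilength `m` creates a peak there. Hence the pairs (path, peak) number
`(2m + 1) · Catalan m = C(2m + 1, m + 1)`. On the Narayana side,
`k · N(n, k) = C(n - 1, k - 1) · C(n, k - 1)`, and Vandermonde's identity sums these to
`C(2n - 1, n)`.
-/

lemma isDyck_iff_take (w : List Bool) : IsDyck w ↔ w.count true = w.count false ∧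
    ∀ j, (w.take j).count false ≤ (w.take j).count true := by
  refine and_congr_right fun _ => ⟨fun h j => h _ (w.take_prefix j), fun h p hp => ?_⟩
  rw [List.prefix_iff_eq_take.mp hp]
  exact h _

def insertPeak (v : List Bool) (i : ℕ) : List Bool := v.take i ++ true :: false :: v.drop i

def erasePeak (w : List Bool) (i : ℕ) : List Bool := w.take i ++ w.drop (i + 2)

section Peaks

variable {v w : List Bool} {i j : ℕ}

lemma length_insertPeak (v : List Bool) (i : ℕ) : (insertPeak v i).length = v.length + 2 := by
  simp only [insertPeak, List.length_append, List.length_take, List.length_cons, List.length_drop]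
  omega

lemma count_insertPeak (v : List Bool) (i : ℕ) (b : Bool) :
    (insertPeak v i).count b = v.count b + 1 := by
  have hsplit : v.count b = (v.take i).count b + (v.drop i).count b := by
    rw [← List.count_append, List.take_append_drop]
  cases b <;> simp [insertPeak, hsplit, add_assoc]

lemma take_insertPeak_of_le (hi : i ≤ v.length) (hj : j ≤ i) :
    (insertPeak v i).take j = v.take j := by
  simp [insertPeak, List.take_append, Nat.min_eq_left hi, Nat.sub_eq_zero_of_le hj,
    List.take_take, Nat.min_eq_left hj]

lemma take_add_one_insertPeak (hi : i ≤ v.length) :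
    (insertPeak v i).take (i + 1) = v.take i ++ [true] := by
  simp [insertPeak, List.take_append, Nat.min_eq_left hi]

lemma take_add_two_insertPeak (hi : i ≤ v.length) (hij : i ≤ j) :
    (insertPeak v i).take (j + 2) = insertPeak (v.take j) i := by
  obtain ⟨k, rfl⟩ := Nat.exists_eq_add_of_le hij
  simp [insertPeak, List.take_append, List.take_take, List.drop_take, hi,
    show i + k + 2 - i = k + 2 by omega, show i ≤ i + k + 2 by omega]

lemma isPeakAt_insertPeak (hi : i ≤ v.length) : IsPeakAt (insertPeak v i) i := by
  have hl : (v.take i).length = i := by simp [hi]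
  constructor <;> simp [insertPeak, hl]

lemma erasePeak_insertPeak (hi : i ≤ v.length) : erasePeak (insertPeak v i) i = v := by
  simp [erasePeak, insertPeak, List.drop_append, List.drop_eq_nil_of_le, hi]

lemma isDyck_insertPeak_iff (hi : i ≤ v.length) : IsDyck (insertPeak v i) ↔ IsDyck v := by
  simp only [isDyck_iff_take, count_insertPeak, Nat.add_right_cancel_iff]
  refine and_congr_right fun _ => ⟨fun h j => ?_, fun h j => ?_⟩
  · rcases le_total j i with hj | hj
    · simpa [take_insertPeak_of_le hi hj] using h j
    · simpa [take_add_two_insertPeak hi hj, count_insertPeak] using h (j + 2)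
  · rcases le_or_gt j i with hj | hj
    · simpa [take_insertPeak_of_le hi hj] using h j
    obtain ⟨_ | k, rfl⟩ := Nat.exists_eq_add_of_lt hj
    · simpa [take_add_one_insertPeak hi] using (h i).trans (Nat.le_succ _)
    · rw [show i + (k + 1) + 1 = i + k + 2 by omega,
        take_add_two_insertPeak hi (Nat.le_add_right i k)]
      simpa [count_insertPeak] using h (i + k)

lemma IsPeakAt.add_two_le_length (h : IsPeakAt w i) : i + 2 ≤ w.length := by
  have := (List.getElem?_eq_some_iff.mp h.2).1
  omega

lemma IsPeakAt.drop_eq_cons (h : IsPeakAt w i) :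
    w.drop i = true :: false :: w.drop (i + 2) := by
  obtain ⟨hi, hval⟩ := List.getElem?_eq_some_iff.mp h.1
  obtain ⟨hi', hval'⟩ := List.getElem?_eq_some_iff.mp h.2
  rw [List.drop_eq_getElem_cons hi, hval, List.drop_eq_getElem_cons hi', hval']

lemma insertPeak_erasePeak (h : IsPeakAt w i) : insertPeak (erasePeak w i) i = w := by
  have hi : (w.take i).length = i := 
    List.length_take_of_le (by have := h.add_two_le_length; omega)
  rw [insertPeak, erasePeak, List.take_left' hi, List.drop_left' hi, ← h.drop_eq_cons,
    List.take_append_drop]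

lemma length_erasePeak (h : i + 2 ≤ w.length) : (erasePeak w i).length = w.length - 2 := by
  simp only [erasePeak, List.length_append, List.length_take, List.length_drop]
  omega

lemma IsPeakAt.isDyck_erasePeak_iff (h : IsPeakAt w i) : IsDyck (erasePeak w i) ↔ IsDyck w := by
  conv_rhs => rw [← insertPeak_erasePeak h]
  refine (isDyck_insertPeak_iff ?_).symm
  have := h.add_two_le_length
  rw [length_erasePeak this]
  omega

end Peaks
@[simps]
def boolEquivDyckStep : Bool ≃ DyckStep where
  toFun b := if b then .U else .D
  invFun s := decide (s = .U)
  left_inv b := by cases b <;> rfl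
  right_inv s := by cases s <;> rfl

lemma count_map_boolEquivDyckStep (l : List Bool) (s : DyckStep) :
    (l.map boolEquivDyckStep).count s = l.count (boolEquivDyckStep.symm s) := by
  rw [← List.count_map_of_injective _ _ boolEquivDyckStep.injective, Equiv.apply_symm_apply]

lemma count_map_boolEquivDyckStep_symm (l : List DyckStep) (b : Bool) :
    (l.map boolEquivDyckStep.symm).count b = l.count (boolEquivDyckStep b) := by
  rw [← List.count_map_of_injective _ _ boolEquivDyckStep.symm.injective, Equiv.symm_apply_apply]

def IsDyck.toDyckWord {v : List Bool} (h : IsDyck v) : DyckWord where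
  toList := v.map boolEquivDyckStep
  count_U_eq_count_D := by
    simpa [count_map_boolEquivDyckStep] using h.1
  count_D_le_count_U i := by
    simpa [← List.map_take, count_map_boolEquivDyckStep] using ((isDyck_iff_take v).1 h).2 i

lemma isDyck_map_boolEquivDyckStep_symm (p : DyckWord) :
    IsDyck (p.toList.map boolEquivDyckStep.symm) := by
  simpa [isDyck_iff_take, ← List.map_take, count_map_boolEquivDyckStep_symm] using
    ⟨p.count_U_eq_count_D, p.count_D_le_count_U⟩

def dyckEquivDyckWord (m : ℕ) :
    {v : List Bool // v.length = 2 * m ∧ IsDyck v} ≃ {p : DyckWord // p.semilength = m} where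
  toFun v := ⟨v.2.2.toDyckWord, by
    have := v.1.count_true_add_count_false
    have := v.2.2.1
    have : v.2.2.toDyckWord.semilength = v.1.count true := by
      simp [DyckWord.semilength, IsDyck.toDyckWord, count_map_boolEquivDyckStep]
    omega⟩
  invFun p := ⟨p.1.toList.map boolEquivDyckStep.symm, by
    simp [← p.2, DyckWord.two_mul_semilength_eq_length], isDyck_map_boolEquivDyckStep_symm p.1⟩
  left_inv v := by ext1; simp [IsDyck.toDyckWord]
  right_inv p := by ext1; ext1; simp [IsDyck.toDyckWord]

lemma card_dyck (m : ℕ) :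
    Nat.card {v : List Bool // v.length = 2 * m ∧ IsDyck v} = catalan m := by
  rw [Nat.card_congr (dyckEquivDyckWord m), Nat.card_eq_fintype_card,
    DyckWord.card_dyckWord_semilength_eq_catalan]

def peakedDyckEquiv (m : ℕ) :
    {p : List Bool × ℕ // p.1.length = 2 * (m + 1) ∧ IsDyck p.1 ∧ IsPeakAt p.1 p.2} ≃
      {v : List Bool // v.length = 2 * m ∧ IsDyck v} × Fin (2 * m + 1) where
  toFun p :=
    (⟨erasePeak p.1.1 p.1.2, by rw [length_erasePeak p.2.2.2.add_two_le_length, p.2.1]; omega,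
      p.2.2.2.isDyck_erasePeak_iff.2 p.2.2.1⟩,
     ⟨p.1.2, by have := p.2.2.2.add_two_le_length; omega⟩)
  invFun q :=
    have hi : q.2.1 ≤ q.1.1.length := by have := q.2.isLt; have := q.1.2.1; omega
    ⟨(insertPeak q.1.1 q.2, q.2), by rw [length_insertPeak, q.1.2.1]; ring,
      (isDyck_insertPeak_iff hi).2 q.1.2.2, isPeakAt_insertPeak hi⟩
  left_inv p := Subtype.ext (Prod.ext (insertPeak_erasePeak p.2.2.2) rfl)
  right_inv q := by
    have := q.2.isLt
    have := q.1.2.1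
    exact Prod.ext (Subtype.ext (erasePeak_insertPeak (v := q.1.1) (i := q.2) (by omega))) rfl

lemma card_peaked_dyck (m : ℕ) :
    Nat.card {p : List Bool × ℕ //
        p.1.length = 2 * (m + 1) ∧ IsDyck p.1 ∧ IsPeakAt p.1 p.2} =
      (2 * m + 1) * catalan m := by
  rw [Nat.card_congr (peakedDyckEquiv m), Nat.card_prod, card_dyck, Nat.card_eq_fintype_card,
    Fintype.card_fin, mul_comm]

lemma two_mul_add_one_mul_catalan (m : ℕ) :
    (2 * m + 1) * catalan m = (2 * m + 1).choose (m + 1) := by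
  refine Nat.eq_of_mul_eq_mul_left m.succ_pos ?_
  calc (m + 1) * ((2 * m + 1) * catalan m) = (2 * m + 1) * ((m + 1) * catalan m) := by ring
    _ = (2 * m + 1) * (2 * m).choose m := by
      rw [succ_mul_catalan_eq_centralBinom, Nat.centralBinom_eq_two_mul_choose]
    _ = (m + 1) * (2 * m + 1).choose (m + 1) := by rw [Nat.add_one_mul_choose_eq, mul_comm]

lemma sum_range_choose_mul_choose_succ (m : ℕ) :
    ∑ j ∈ Finset.range (m + 1), m.choose j * (m + 1).choose j = (2 * m + 1).choose (m + 1) := by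
  rw [show 2 * m + 1 = m + (m + 1) by ring, Nat.add_choose_eq,
    Finset.Nat.sum_antidiagonal_eq_sum_range_succ_mk, Finset.sum_range_succ _ (m + 1)]
  simp only [Nat.choose_succ_self, zero_mul, add_zero]
  refine Finset.sum_congr rfl fun j hj => ?_
  rw [Nat.choose_symm (by have := Finset.mem_range.1 hj; omega)]

lemma add_one_mul_narayana (m k : ℕ) :
    ((k + 1 : ℕ) : ℚ) *
        ((1 / ((m + 1 : ℕ) : ℚ)) * (m + 1).choose (k + 1) * (m + 1).choose k) =
      m.choose k * (m + 1).choose k := by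
  have h : ((m + 1 : ℕ) : ℚ) * m.choose k = (m + 1).choose (k + 1) * (k + 1 : ℕ) := by
    exact_mod_cast Nat.add_one_mul_choose_eq m k
  field_simp
  linear_combination -((m + 1).choose k : ℚ) * h

lemma sum_Icc_mul_narayana {n : ℕ} (hn : 1 ≤ n) :
    ∑ k ∈ Finset.Icc 1 n, (k : ℚ) * ((1 / n) * (n.choose k) * (n.choose (k - 1))) =
      (2 * n - 1).choose n := by
  obtain ⟨m, rfl⟩ := Nat.exists_eq_add_of_le' hn
  rw [show 2 * (m + 1) - 1 = 2 * m + 1 by omega, ← Finset.Ico_add_one_right_eq_Icc,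
    Finset.sum_Ico_eq_sum_range]
  simp only [Nat.add_sub_cancel, add_comm 1, add_one_mul_narayana]
  exact_mod_cast sum_range_choose_mul_choose_succ m

theorem total_peaks_dyck (n : ℕ) (hn : 1 ≤ n) :
    Nat.card {p : List Bool × ℕ //
        p.1.length = 2 * n ∧ IsDyck p.1 ∧ IsPeakAt p.1 p.2} =
      Nat.choose (2 * n - 1) n ∧
    ∑ k ∈ Finset.Icc 1 n,
        (k : ℚ) * ((1 / n) * (n.choose k) * (n.choose (k - 1))) =
      Nat.choose (2 * n - 1) n := by
  refine ⟨?_, sum_Icc_mul_narayana hn⟩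
  obtain ⟨m, rfl⟩ := Nat.exists_eq_add_of_le' hn
  rw [card_peaked_dyck, two_mul_add_one_mul_catalan, show 2 * (m + 1) - 1 = 2 * m + 1 by omega]
end

section
/- The number of super Dyck paths of order n with exactly k peaks is C(n,k)². -/
open Finset

theorem Nat.card_list_subtype {α : Type*} [Fintype α] (p : List α → Prop) [Decidable (p [])]
    (hp : {w | p w}.Finite) :
    Nat.card {w // p w} = (if p [] then 1 else 0) + ∑ x, Nat.card {t // p (x :: t)} := by
  let e : {w // p w} ≃ PLift (p []) ⊕ Σ x, {t // p (x :: t)} :=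
    { toFun := fun
        | ⟨[], h⟩ => .inl ⟨h⟩
        | ⟨x :: t, h⟩ => .inr ⟨x, t, h⟩
      invFun := fun
        | .inl h => ⟨[], h.down⟩
        | .inr ⟨x, t, h⟩ => ⟨x :: t, h⟩
      left_inv := by rintro ⟨_ | ⟨x, t⟩, h⟩ <;> rfl
      right_inv := by rintro (h | ⟨x, t, h⟩) <;> rfl }
  have : Finite {w // p w} := hp
  have : Finite (PLift (p []) ⊕ Σ x, {t // p (x :: t)}) := .of_equiv _ e
  have : ∀ x, Finite {t // p (x :: t)} := fun x =>
    .of_injective (fun t => (Sum.inr ⟨x, t⟩ : PLift (p []) ⊕ Σ x, {t // p (x :: t)}))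
      (fun t t' h => by simpa using h)
  rw [Nat.card_congr e, Nat.card_sum, Nat.card_sigma]
  by_cases h : p [] <;> simp [h]

def peaks : List Bool → ℕ
  | [] => 0
  | a :: t => peaks t + if a = true ∧ t.head? = some false then 1 else 0

@[simp] lemma peaks_cons_false (t : List Bool) : peaks (false :: t) = peaks t := by simp [peaks]
@[simp] lemma peaks_cons_true_cons_false (t : List Bool) :
    peaks (true :: false :: t) = peaks t + 1 := by simp [peaks]
@[simp] lemma peaks_cons_true_cons_true (t : List Bool) :
    peaks (true :: true :: t) = peaks (true :: t) := by simp [peaks]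

lemma peaks_replicate_true (n : ℕ) : peaks (List.replicate n true) = 0 := by
  induction n with
  | zero => rfl
  | succ n ih => cases n <;> simp_all [List.replicate_succ, peaks]

lemma IsPeakAt.lt_length {w : List Bool} {i : ℕ} (h : IsPeakAt w i) : i < w.length :=
  (List.getElem?_eq_some_iff.1 h.1).1

@[simp] lemma isPeakAt_cons_succ (a : Bool) (t : List Bool) (i : ℕ) :
    IsPeakAt (a :: t) (i + 1) ↔ IsPeakAt t i := Iff.rfl

@[simp] lemma isPeakAt_cons_zero (a : Bool) (t : List Bool) :
    IsPeakAt (a :: t) 0 ↔ a = true ∧ t.head? = some false := by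
  simp [IsPeakAt, ← List.head?_eq_getElem?]

instance (w : List Bool) : DecidablePred (IsPeakAt w) :=
  fun _ => inferInstanceAs (Decidable (_ ∧ _))

lemma sum_isPeakAt_eq_peaks (w : List Bool) :
    ∑ i ∈ range w.length, (if IsPeakAt w i then 1 else 0) = peaks w := by
  induction w with
  | nil => rfl
  | cons a t ih =>
    rw [List.length_cons, sum_range_succ', peaks, ← ih]
    simp

lemma card_isPeakAt (w : List Bool) : Nat.card {i // IsPeakAt w i} = peaks w := by
  rw [← sum_isPeakAt_eq_peaks, ← card_filter, ← Nat.card_eq_finsetCard]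
  exact Nat.card_congr (Equiv.subtypeEquivRight fun i => by simpa using fun h => h.lt_length)

abbrev IsWordOf (a b k : ℕ) (w : List Bool) : Prop :=
  w.count true = a ∧ w.count false = b ∧ peaks w = k

lemma finite_isWordOf (a b k : ℕ) : {w | IsWordOf a b k w}.Finite :=
  (List.finite_length_eq Bool (a + b)).subset fun w ⟨ha, hb, _⟩ =>
    show w.length = a + b by rw [← List.count_true_add_count_false, ha, hb]

lemma finite_isWordOf_cons (a b k : ℕ) (x : Bool) : {t | IsWordOf a b k (x :: t)}.Finite :=
  (finite_isWordOf a b k).preimage List.cons_injective.injOn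

noncomputable def numWords (a b k : ℕ) : ℕ :=
  Nat.card {w // IsWordOf a b k w}

noncomputable def numWordsConsTrue (a b k : ℕ) : ℕ :=
  Nat.card {t // IsWordOf a b k (true :: t)}

lemma numWords_zero_right (a k : ℕ) : numWords a 0 k = if k = 0 then 1 else 0 := by
  have key (w : List Bool) : IsWordOf a 0 k w ↔ w = List.replicate a true ∧ k = 0 := by
    constructor
    · rintro ⟨ha, hb, rfl⟩
      have hw : w = List.replicate a true := by
        rw [List.eq_replicate_iff, ← List.count_true_add_count_false, ha, hb]
        simpa [List.count_eq_zero] using hb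
      exact ⟨hw, hw ▸ peaks_replicate_true a⟩
    · rintro ⟨rfl, rfl⟩
      exact ⟨by simp, by simp [List.count_replicate], peaks_replicate_true a⟩
  rw [numWords, Nat.card_congr (Equiv.subtypeEquivRight key)]
  split_ifs with hk <;> simp [hk]

lemma numWords_succ_right (a b k : ℕ) :
    numWords a (b + 1) k = numWordsConsTrue a (b + 1) k + numWords a b k := by
  rw [numWords, Nat.card_list_subtype _ (finite_isWordOf _ _ _), Fintype.sum_bool]
  simp [numWords, numWordsConsTrue, IsWordOf]

lemma numWordsConsTrue_zero_left (b k : ℕ) : numWordsConsTrue 0 b k = 0 := by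
  simp [numWordsConsTrue, IsWordOf]

lemma numWordsConsTrue_succ_succ_succ (a b k : ℕ) :
    numWordsConsTrue (a + 1) (b + 1) (k + 1) =
      numWordsConsTrue a (b + 1) (k + 1) + numWords a b k := by
  rw [numWordsConsTrue, Nat.card_list_subtype _ (finite_isWordOf_cons _ _ _ _), Fintype.sum_bool]
  simp [numWords, numWordsConsTrue, IsWordOf]

lemma numWordsConsTrue_succ_zero (a b : ℕ) : numWordsConsTrue a (b + 1) 0 = 0 := by
  induction a with
  | zero => exact numWordsConsTrue_zero_left _ _
  | succ a ih =>
    rw [numWordsConsTrue, Nat.card_list_subtype _ (finite_isWordOf_cons _ _ _ _), Fintype.sum_bool]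
    simpa [numWordsConsTrue, IsWordOf] using ih

theorem numWords_eq (a b k : ℕ) : numWords a b k = a.choose k * b.choose k := by
  induction b generalizing a k with
  | zero => cases k <;> simp [numWords_zero_right]
  | succ b ih =>
    have hConsTrue (a k : ℕ) : numWordsConsTrue a (b + 1) (k + 1) = a.choose (k + 1) * b.choose k := by
      induction a with
      | zero => simp [numWordsConsTrue_zero_left]
      | succ a iha => rw [numWordsConsTrue_succ_succ_succ, iha, ih, Nat.choose_succ_succ]; ring
    rw [numWords_succ_right, ih]
    cases k with
    | zero => simp [numWordsConsTrue_succ_zero]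
    | succ k => rw [hConsTrue, Nat.choose_succ_succ b]; ring

/-- The number of words with `n` `U`s and `n` `D`s having exactly `k`
occurrences of the factor `UD` is `C(n,k)²`. -/
theorem superDyck_with_k_peaks (n k : ℕ) :
    Nat.card {w : List Bool //
        w.length = 2 * n ∧ w.count true = n ∧
        Nat.card {i : ℕ // IsPeakAt w i} = k} =
      n.choose k ^ 2 := by
  rw [sq, ← numWords_eq, numWords]
  refine Nat.card_congr (Equiv.subtypeEquivRight fun w => ?_)
  rw [IsWordOf, card_isPeakAt, ← List.count_true_add_count_false]
  omega
end

section
/- For n ≥ 1 and 1 ≤ k ≤ n, (1/k)·(C(n-1,k-1)² + C(n-1,k-2)·C(n-1,k-1)) = (1/n)·C(n,k)·C(n,k-1). -/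
/-- Binomial coefficient with the convention `C(a,b) = 0` for `b < 0`. -/
def zchoose (a b : ℤ) : ℤ :=
  if b < 0 then 0 else (a.toNat.choose b.toNat : ℤ)

theorem narayana_identity (n k : ℕ) (hn : 1 ≤ n) (hk1 : 1 ≤ k) (hkn : k ≤ n) :
    (1 / (k : ℚ)) *
        ((zchoose ((n : ℤ) - 1) ((k : ℤ) - 1) : ℚ) ^ 2 +
          (zchoose ((n : ℤ) - 1) ((k : ℤ) - 2) : ℚ) *
            (zchoose ((n : ℤ) - 1) ((k : ℤ) - 1) : ℚ)) =
      (1 / (n : ℚ)) * (n.choose k) * (n.choose (k - 1)) := by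
  obtain ⟨m, rfl⟩ : ∃ m, n = m + 1 := ⟨n - 1, (Nat.succ_pred_eq_of_pos hn).symm⟩
  rcases Nat.lt_or_ge k 2 with hk2 | hk2
  · interval_cases k
    simp [zchoose, Nat.choose_one_right]
    field_simp
  · obtain ⟨c, rfl⟩ : ∃ c, k = c + 2 := ⟨k - 2, (Nat.sub_add_cancel hk2).symm⟩
    have hcm : c + 1 ≤ m := by omega
    have h1 : zchoose ((m:ℤ) + 1 - 1) (((c:ℤ) + 2) - 1) = (m.choose (c+1) : ℤ) := by
      simp only [zchoose]
      rw [if_neg (by omega)]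
      rw [show ((m:ℤ)+1-1).toNat = m by omega, show (((c:ℤ)+2)-1).toNat = c + 1 by omega]
    have h2 : zchoose ((m:ℤ) + 1 - 1) (((c:ℤ) + 2) - 2) = (m.choose c : ℤ) := by
      simp only [zchoose]
      rw [if_neg (by omega)]
      rw [show ((m:ℤ)+1-1).toNat = m by omega, show (((c:ℤ)+2)-2).toNat = c by omega]
    push_cast
    rw [h1, h2]
    push_cast
    have hpas : (m.choose c : ℚ) + m.choose (c+1) = (m+1).choose (c+1) := by
      exact_mod_cast (Nat.choose_succ_succ m c).symm
    have key : ((m:ℚ)+1) * m.choose (c+1) = (m+1).choose (c+2) * (c+2) := by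
      exact_mod_cast Nat.add_one_mul_choose_eq m (c+1)
    have hc0 : ((c:ℚ)+2) ≠ 0 := by positivity
    have hm0 : ((m:ℚ)+1) ≠ 0 := by positivity
    field_simp
    linear_combination ((m:ℚ)+1)*(m.choose (c+1):ℚ)*hpas + ((m+1).choose (c+1):ℚ)*key
end

section
/- For all n ≥ 0 and all m ≥ 0: ∑_{k=0}^{n} C(n,k)²·(m+1)^k = ∑_{k=0}^{n} C(n+k,2k)·C(2k,k)·m^{n-k}. -/
/-!
Expanding `(x + 1) ^ k` binomially, the coefficient of `x ^ (n - d)` on the left is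
`∑ k, C(n, k)² C(k, n - d)`. Writing `n = j + d`, the identity
`C(n, k) C(k, j) = C(n, j) C(d, k - j)` and Vandermonde's convolution turn it into
`C(n, j) C(n + d, n)`, and trinomial revision rewrites this as `C(n + d, 2d) C(2d, d)`.
-/

open Finset

namespace Nat

theorem sum_range_choose_add_mul_choose (a b j : ℕ) :
    ∑ i ∈ range (b + 1), a.choose (j + i) * b.choose i = (a + b).choose (j + b) := by
  calc ∑ i ∈ range (b + 1), a.choose (j + i) * b.choose i
      = ∑ q ∈ range (b + 1), b.choose q * a.choose (j + b - q) := by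
        rw [← sum_range_reflect]
        refine sum_congr rfl fun q hq => ?_
        have hqb : q ≤ b := Nat.lt_succ_iff.mp (mem_range.mp hq)
        rw [show b + 1 - 1 - q = b - q by omega, choose_symm hqb, mul_comm,
          show j + b - q = j + (b - q) by omega]
    _ = ∑ q ∈ range (j + b + 1), b.choose q * a.choose (j + b - q) :=
        sum_subset (range_subset_range.mpr (by omega)) fun q _ hq => by
          rw [choose_eq_zero_of_lt (by simpa using hq), zero_mul]
    _ = (a + b).choose (j + b) := by
        rw [add_comm a, add_choose_eq,
          Finset.Nat.sum_antidiagonal_eq_sum_range_succ (fun q p => b.choose q * a.choose p)]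

theorem sum_range_choose_sq_mul_choose_sub {n d : ℕ} (hd : d ≤ n) :
    ∑ k ∈ range (n + 1), n.choose k ^ 2 * k.choose (n - d) =
      (n + d).choose (2 * d) * (2 * d).choose d := by
  obtain ⟨j, rfl⟩ := Nat.exists_eq_add_of_le' hd
  rw [Nat.add_sub_cancel, add_assoc, sum_range_add]
  have hvanish : ∑ k ∈ range j, (j + d).choose k ^ 2 * k.choose j = 0 :=
    sum_eq_zero fun k hk => by rw [choose_eq_zero_of_lt (mem_range.mp hk), mul_zero]
  have hterm (i : ℕ) : (j + d).choose (j + i) ^ 2 * (j + i).choose j =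
      (j + d).choose j * ((j + d).choose (j + i) * d.choose i) := by
    rw [sq, mul_assoc, choose_mul (le_add_right j i), Nat.add_sub_cancel_left,
      Nat.add_sub_cancel_left]
    ring
  have htrinomial : (j + d + d).choose (j + d) * (j + d).choose j =
      (j + d + d).choose (2 * d) * (2 * d).choose d := by
    rw [choose_mul (le_add_right j d), choose_symm_of_eq_add (by omega : j + d + d = j + 2 * d),
      show j + d + d - j = 2 * d by omega, Nat.add_sub_cancel_left]
  rw [hvanish, zero_add, sum_congr rfl fun i _ => hterm i, ← mul_sum,
    sum_range_choose_add_mul_choose, mul_comm, htrinomial]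

end Nat

theorem add_one_pow_eq_sum_range {R : Type*} [CommSemiring R] (x : R) {k N : ℕ} (hk : k < N) :
    (x + 1) ^ k = ∑ j ∈ range N, x ^ j * (k.choose j : R) := by
  rw [add_pow]
  refine sum_subset (range_subset_range.mpr hk) (fun j _ hj => ?_) |>.trans (sum_congr rfl ?_)
  · rw [Nat.choose_eq_zero_of_lt (by simpa using hj)]
    simp
  · simp

theorem sum_choose_sq_mul_add_one_pow {R : Type*} [CommSemiring R] (n : ℕ) (x : R) :
    ∑ k ∈ range (n + 1), (n.choose k : R) ^ 2 * (x + 1) ^ k =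
      ∑ k ∈ range (n + 1), ((n + k).choose (2 * k) * (2 * k).choose k : ℕ) * x ^ (n - k) := by
  calc ∑ k ∈ range (n + 1), (n.choose k : R) ^ 2 * (x + 1) ^ k
      = ∑ j ∈ range (n + 1),
          x ^ j * ((∑ k ∈ range (n + 1), n.choose k ^ 2 * k.choose j : ℕ) : R) := by
        have hexpand (k : ℕ) (hk : k ∈ range (n + 1)) : (n.choose k : R) ^ 2 * (x + 1) ^ k =
            ∑ j ∈ range (n + 1), (n.choose k : R) ^ 2 * (x ^ j * k.choose j) := by
          rw [add_one_pow_eq_sum_range x (mem_range.mp hk), mul_sum]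
        rw [sum_congr rfl hexpand, sum_comm]
        refine sum_congr rfl fun j _ => ?_
        push_cast
        rw [mul_sum]
        exact sum_congr rfl fun _ _ => by ring
    _ = ∑ d ∈ range (n + 1),
          x ^ (n - d) * ((∑ k ∈ range (n + 1), n.choose k ^ 2 * k.choose (n - d) : ℕ) : R) :=
        (sum_range_reflect _ _).symm
    _ = _ := sum_congr rfl fun d hd => by
        rw [Nat.sum_range_choose_sq_mul_choose_sub (Nat.lt_succ_iff.mp (mem_range.mp hd)), mul_comm]

theorem schroeder_identity (n m : ℕ) :
    ∑ k ∈ Finset.range (n + 1), n.choose k ^ 2 * (m + 1) ^ k =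
      ∑ k ∈ Finset.range (n + 1),
        (n + k).choose (2 * k) * (2 * k).choose k * m ^ (n - k) := by
  simpa using sum_choose_sq_mul_add_one_pow n m
end

section
/- ∑_{k=0}^{n} C(n,k)²·2^k = ∑_{k=0}^{n} C(n+k,2k)·C(2k,k) for all n ≥ 0. -/
/-!
Both sides equal `∑ᵢ C(n,i)² 2^(n-i)`. On the right, trinomial revision turns
`C(n+k,2k) C(2k,k)` into `C(n+k,k) C(n,k)`, and Vandermonde's identity expands
`C(n+k,k) = ∑ᵢ C(n,i) C(k,i)`. Exchanging the two sums leaves the inner sum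
`∑ₖ C(n,k) C(k,i) = C(n,i) 2^(n-i)`, which counts pairs `I ⊆ K ⊆ [n]` with `|I| = i`.
-/

open Finset

namespace Nat

theorem add_choose_eq_sum_range_choose_mul_choose (m k : ℕ) :
    (m + k).choose k = ∑ i ∈ range (m + 1), m.choose i * k.choose i := by
  rw [← choose_symm_add, add_comm m k, add_choose_eq,
    Finset.Nat.sum_antidiagonal_eq_sum_range_succ_mk]
  refine sum_congr rfl fun i hi => ?_
  rw [choose_symm (mem_range_succ_iff.mp hi), mul_comm]

theorem sum_range_choose_mul_choose (n i : ℕ) :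
    ∑ k ∈ range (n + 1), n.choose k * k.choose i = n.choose i * 2 ^ (n - i) := by
  rcases lt_or_ge n i with hni | hin
  · rw [choose_eq_zero_of_lt hni, zero_mul]
    refine sum_eq_zero fun k hk => ?_
    rw [choose_eq_zero_of_lt (show k < i by grind), mul_zero]
  have hsplit : n + 1 = i + (n - i + 1) := by omega
  rw [hsplit, sum_range_add, ← sum_range_choose (n - i), mul_sum]
  have hlow : ∑ k ∈ range i, n.choose k * k.choose i = 0 :=
    sum_eq_zero fun k hk => by rw [choose_eq_zero_of_lt (mem_range.mp hk), mul_zero]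
  rw [hlow, zero_add]
  refine sum_congr rfl fun t _ => ?_
  rw [choose_mul (le_add_right i t), add_tsub_cancel_left]

end Nat

theorem schroeder_identity_m_one (n : ℕ) :
    ∑ k ∈ Finset.range (n + 1), n.choose k ^ 2 * 2 ^ k =
      ∑ k ∈ Finset.range (n + 1), (n + k).choose (2 * k) * (2 * k).choose k := by
  have trinomial_revision (k : ℕ) :
      (n + k).choose (2 * k) * (2 * k).choose k = (n + k).choose k * n.choose k := by
    rw [Nat.choose_mul (by omega : k ≤ 2 * k)]
    congr 2 <;> omega
  calc ∑ k ∈ range (n + 1), n.choose k ^ 2 * 2 ^ k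
      = ∑ i ∈ range (n + 1), n.choose i ^ 2 * 2 ^ (n - i) := by
        rw [← sum_range_reflect]
        refine sum_congr rfl fun i hi => ?_
        rw [add_tsub_cancel_right, Nat.choose_symm (mem_range_succ_iff.mp hi)]
    _ = ∑ i ∈ range (n + 1), ∑ k ∈ range (n + 1), n.choose i * n.choose k * k.choose i := by
        simp_rw [mul_assoc, ← mul_sum, Nat.sum_range_choose_mul_choose]
        ring_nf
    _ = ∑ k ∈ range (n + 1), (n + k).choose k * n.choose k := by
        rw [sum_comm]
        refine sum_congr rfl fun k _ => ?_
        rw [Nat.add_choose_eq_sum_range_choose_mul_choose, sum_mul]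
        exact sum_congr rfl fun i _ => by ring
    _ = _ := sum_congr rfl fun k _ => (trinomial_revision k).symm
end
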